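/- arXiv:2212.13954 — 5 statements merged into one kernel-verified Lean document; each statement's English description precedes it below -/
import Mathlib

section
/- Let l > 0 and σ > 0, set K_σ := {k > 0 : cos(kl) = 0 or 2k·sin(kl) = σ·cos(kl)}, and suppose κ : ℕ → ℝ is a strictly increasing function whose range is exactly K_σ. Then lim_{N→∞} (1/N)·∑_{n=0}^{N−1} ( κ(n)² − (nπ/(2l))² ) = σ/(2l). -/
/-!
In the variable `t = k l` the δ-coupling condition reads `t sin t = a cos t` with `a = σ l / 2`.
Besides the zeros `(2m+1)π/2` of `cos`, it has exactly one root `t_m = mπ + δ_m` in each interval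
`(mπ, mπ + π/2)`, so the spectrum interleaves as `t_0 < π/2 < t_1 < 3π/2 < ⋯`. The odd-indexed gaps
vanish, while `t_m sin δ_m = a cos δ_m` squeezes `t_m δ_m` between `a cos δ_m` and `a`, so the
even-indexed gaps `t_m² - (mπ)² = 2 t_m δ_m - δ_m²` tend to `2a`. The Cesàro mean of the gaps is
therefore half of `2a / l² = σ / l`.
-/

open Real Filter Topology Set Finset

lemma sum_range_eq_sum_range_two_mul_of_odd_eq_zero {M : Type*} [AddCommMonoid M]
    {f : ℕ → M} (hodd : ∀ m, f (2 * m + 1) = 0) (N : ℕ) :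
    ∑ n ∈ range N, f n = ∑ m ∈ range ((N + 1) / 2), f (2 * m) := by
  induction N with
  | zero => simp
  | succ N ih =>
    rw [sum_range_succ, ih]
    obtain ⟨m, rfl | rfl⟩ := Nat.even_or_odd' N
    · rw [show (2 * m + 1) / 2 = m by omega, show (2 * m + 1 + 1) / 2 = m + 1 by omega,
        sum_range_succ]
    · rw [show (2 * m + 1 + 1) / 2 = m + 1 by omega, show (2 * m + 1 + 1 + 1) / 2 = m + 1 by omega,
        hodd, add_zero]

lemma tendsto_natCast_succ_div_two_div :
    Tendsto (fun N : ℕ => (((N + 1) / 2 : ℕ) : ℝ) / N) atTop (𝓝 (1 / 2)) := by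
  have hupper : Tendsto (fun N : ℕ => 1 / 2 + 1 / 2 * (1 / (N : ℝ))) atTop (𝓝 (1 / 2)) := by
    have := (tendsto_one_div_atTop_nhds_zero_nat.const_mul (1 / 2 : ℝ)).const_add (1 / 2)
    rwa [mul_zero, add_zero] at this
  refine tendsto_of_tendsto_of_tendsto_of_le_of_le' tendsto_const_nhds hupper ?_ ?_ <;>
    filter_upwards [eventually_gt_atTop 0] with N hN
  · have : (N : ℝ) ≤ 2 * (((N + 1) / 2 : ℕ) : ℝ) := by
      exact_mod_cast (by omega : N ≤ 2 * ((N + 1) / 2))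
    rw [le_div_iff₀ (by positivity)]
    linarith
  · calc (((N + 1) / 2 : ℕ) : ℝ) / N ≤ ((N + 1 : ℕ) : ℝ) / 2 / N := by gcongr; exact Nat.cast_div_le
      _ = 1 / 2 + 1 / 2 * (1 / N) := by field_simp; push_cast; ring

lemma tendsto_cesaro_of_two_mul_of_odd_eq_zero {f : ℕ → ℝ} {L : ℝ}
    (heven : Tendsto (fun m => f (2 * m)) atTop (𝓝 L)) (hodd : ∀ m, f (2 * m + 1) = 0) :
    Tendsto (fun N : ℕ => (1 / (N : ℝ)) * ∑ n ∈ range N, f n) atTop (𝓝 (L / 2)) := by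
  have hhalf : Tendsto (fun N : ℕ => (N + 1) / 2) atTop atTop :=
    (Nat.tendsto_div_const_atTop two_ne_zero).comp (tendsto_add_atTop_nat 1)
  have hlim := tendsto_natCast_succ_div_two_div.mul (heven.cesaro.comp hhalf)
  rw [one_div_mul_eq_div] at hlim
  refine hlim.congr' ?_
  filter_upwards [eventually_gt_atTop 0] with N hN
  have hM : (((N + 1) / 2 : ℕ) : ℝ) ≠ 0 := by norm_cast; omega
  simp only [Function.comp_apply, sum_range_eq_sum_range_two_mul_of_odd_eq_zero hodd N]
  field_simp

section SecularEquation

variable {a c t δ : ℝ}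

lemma mul_sin_add_nat_mul_pi_eq_iff (m : ℕ) :
    t * sin (δ + m * π) = a * cos (δ + m * π) ↔ t * sin δ = a * cos δ := by
  rw [sin_add_nat_mul_pi, cos_add_nat_mul_pi, mul_left_comm, mul_left_comm a,
    mul_right_inj' (pow_ne_zero m (neg_ne_zero.2 one_ne_zero))]

lemma mem_Ioo_of_mul_sin_eq (ha : 0 < a) (ht : 0 < t) (hδ : δ ∈ Ico 0 π)
    (h : t * sin δ = a * cos δ) : δ ∈ Ioo 0 (π / 2) := by
  refine ⟨hδ.1.lt_of_ne ?_, lt_of_not_ge fun hδπ => ?_⟩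
  · rintro rfl
    simp only [sin_zero, mul_zero, cos_zero, mul_one] at h
    exact ha.ne h
  · have hsin : 0 < sin δ := sin_pos_of_pos_of_lt_pi (by linarith [pi_pos]) hδ.2
    have hcos : cos δ ≤ 0 := cos_nonpos_of_pi_div_two_le_of_le hδπ (by linarith [hδ.2, pi_pos])
    nlinarith [mul_pos ht hsin]

lemma strictMonoOn_secular (ha : 0 < a) (hc : 0 ≤ c) :
    StrictMonoOn (fun δ => (c + δ) * sin δ - a * cos δ) (Icc 0 (π / 2)) := by
  intro x hx y hy hxy
  have hsin : sin x ≤ sin y :=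
    strictMonoOn_sin.monotoneOn ⟨by linarith [hx.1, pi_pos], hx.2⟩
      ⟨by linarith [hy.1, pi_pos], hy.2⟩ hxy.le
  have hcos : cos y < cos x :=
    strictAntiOn_cos ⟨hx.1, by linarith [hx.2, pi_pos]⟩ ⟨hy.1, by linarith [hy.2, pi_pos]⟩ hxy
  have hprod : (c + x) * sin x ≤ (c + y) * sin y :=
    mul_le_mul (by linarith) hsin (sin_nonneg_of_nonneg_of_le_pi hx.1 (by linarith [hx.2, pi_pos]))
      (by linarith [hy.1])
  dsimp only
  nlinarith [mul_lt_mul_of_pos_left hcos ha]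

lemma existsUnique_secular_root (ha : 0 < a) (hc : 0 ≤ c) :
    ∃! δ, δ ∈ Ioo 0 (π / 2) ∧ (c + δ) * sin δ = a * cos δ := by
  have hmono := strictMonoOn_secular ha hc
  obtain ⟨δ, hδ, hδ0⟩ : (0 : ℝ) ∈ (fun δ => (c + δ) * sin δ - a * cos δ) '' Ioo 0 (π / 2) :=
    intermediate_value_Ioo (by positivity) (by fun_prop)
      ⟨by simpa using ha, by
        simp only [sin_pi_div_two, cos_pi_div_two, mul_one, mul_zero, sub_zero]
        linarith [pi_pos]⟩
  refine ⟨δ, ⟨hδ, sub_eq_zero.1 hδ0⟩, fun δ' ⟨hδ', h⟩ => ?_⟩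
  exact hmono.injOn (Ioo_subset_Icc_self hδ') (Ioo_subset_Icc_self hδ)
    ((sub_eq_zero.2 h).trans hδ0.symm)

lemma mul_mem_Icc_of_mul_sin_eq (ht : 0 ≤ t) (hδ : δ ∈ Ioo 0 (π / 2))
    (h : t * sin δ = a * cos δ) : t * δ ∈ Icc (a * cos δ) a := by
  have hcos : 0 < cos δ := cos_pos_of_mem_Ioo ⟨by linarith [hδ.1, pi_pos], hδ.2⟩
  have htan : δ * cos δ ≤ sin δ := by
    have := (lt_tan hδ.1 hδ.2).le
    rwa [tan_eq_sin_div_cos, le_div_iff₀ hcos] at this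
  refine ⟨h ▸ mul_le_mul_of_nonneg_left (sin_le hδ.1.le) ht, le_of_mul_le_mul_right ?_ hcos⟩
  calc t * δ * cos δ = t * (δ * cos δ) := by ring
    _ ≤ t * sin δ := mul_le_mul_of_nonneg_left htan ht
    _ = a * cos δ := h

lemma tendsto_secular_root_sq_sub_sq {δ : ℕ → ℝ} (hδ : ∀ m, δ m ∈ Ioo 0 (π / 2))
    (h : ∀ m : ℕ, (m * π + δ m) * sin (δ m) = a * cos (δ m)) :
    Tendsto (fun m : ℕ => (m * π + δ m) ^ 2 - (m * π) ^ 2) atTop (𝓝 (2 * a)) := by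
  set t : ℕ → ℝ := fun m => m * π + δ m
  have htpos : ∀ m, 0 < t m := fun m => add_pos_of_nonneg_of_pos (by positivity) (hδ m).1
  have hbounds := fun m => mul_mem_Icc_of_mul_sin_eq (htpos m).le (hδ m) (h m)
  have ht : Tendsto t atTop atTop :=
    tendsto_atTop_mono (fun m => le_add_of_nonneg_right (hδ m).1.le)
      (tendsto_natCast_atTop_atTop.atTop_mul_const pi_pos)
  have hδ0 : Tendsto δ atTop (𝓝 0) :=
    tendsto_of_tendsto_of_tendsto_of_le_of_le tendsto_const_nhds
      (tendsto_const_nhds.div_atTop ht) (fun m => (hδ m).1.le)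
      (fun m => (le_div_iff₀' (htpos m)).2 (hbounds m).2)
  have htδ : Tendsto (fun m => t m * δ m) atTop (𝓝 a) := by
    have hcos : Tendsto (fun m => a * cos (δ m)) atTop (𝓝 a) := by
      simpa using ((continuous_cos.tendsto 0).comp hδ0).const_mul a
    exact tendsto_of_tendsto_of_tendsto_of_le_of_le hcos tendsto_const_nhds
      (fun m => (hbounds m).1) (fun m => (hbounds m).2)
  have hlim := (htδ.const_mul 2).sub (hδ0.pow 2)
  rw [zero_pow two_ne_zero, sub_zero] at hlim
  exact hlim.congr fun m => by ring

def secularRoots (a : ℝ) : Set ℝ := {t | 0 < t ∧ (cos t = 0 ∨ t * sin t = a * cos t)}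

-- The increasing enumeration of `secularRoots a`, where `δ m ∈ (0, π/2)` is the offset of its
-- root in `(mπ, mπ + π/2)`.
noncomputable def rootSeq (δ : ℕ → ℝ) (n : ℕ) : ℝ :=
  if Even n then (n / 2 : ℕ) * π + δ (n / 2) else n * π / 2

lemma rootSeq_two_mul (δ : ℕ → ℝ) (m : ℕ) : rootSeq δ (2 * m) = m * π + δ m := by
  simp [rootSeq]

lemma rootSeq_two_mul_add_one (δ : ℕ → ℝ) (m : ℕ) :
    rootSeq δ (2 * m + 1) = ((2 * m + 1 : ℕ) : ℝ) * π / 2 := by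
  simp [rootSeq]

lemma strictMono_rootSeq {δ : ℕ → ℝ} (hδ : ∀ m, δ m ∈ Ioo 0 (π / 2)) :
    StrictMono (rootSeq δ) := by
  refine strictMono_nat_of_lt_succ fun n => ?_
  obtain ⟨m, rfl | rfl⟩ := Nat.even_or_odd' n
  · rw [rootSeq_two_mul, rootSeq_two_mul_add_one]
    push_cast
    linarith [(hδ m).2]
  · rw [rootSeq_two_mul_add_one, show 2 * m + 1 + 1 = 2 * (m + 1) by ring, rootSeq_two_mul]
    push_cast
    linarith [(hδ (m + 1)).1, pi_pos]

lemma range_rootSeq {δ : ℕ → ℝ} (ha : 0 < a)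
    (hδ : ∀ m : ℕ, δ m ∈ Ioo 0 (π / 2) ∧ (m * π + δ m) * sin (δ m) = a * cos (δ m)) :
    range (rootSeq δ) = secularRoots a := by
  ext t
  constructor
  · rintro ⟨n, rfl⟩
    obtain ⟨m, rfl | rfl⟩ := Nat.even_or_odd' n
    · rw [rootSeq_two_mul]
      refine ⟨add_pos_of_nonneg_of_pos (by positivity) (hδ m).1.1, Or.inr ?_⟩
      rw [add_comm (m * π), mul_sin_add_nat_mul_pi_eq_iff, add_comm]
      exact (hδ m).2
    · rw [rootSeq_two_mul_add_one]
      refine ⟨by push_cast; positivity, Or.inl (cos_eq_zero_iff.2 ⟨m, by push_cast; ring⟩)⟩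
  · rintro ⟨ht, hcos | heq⟩
    · obtain ⟨k, rfl⟩ := cos_eq_zero_iff.1 hcos
      lift k to ℕ using by
        by_contra! hk
        have : (k : ℝ) ≤ -1 := by exact_mod_cast Int.le_sub_one_of_lt hk
        nlinarith [pi_pos]
      exact ⟨2 * k + 1, by rw [rootSeq_two_mul_add_one]; push_cast; ring⟩
    · set m := ⌊t / π⌋₊
      have hfloor : m * π ≤ t ∧ t < m * π + π := by
        constructor
        · exact (le_div_iff₀ pi_pos).1 (Nat.floor_le (by positivity))
        · have := Nat.lt_floor_add_one (t / π)
          rw [div_lt_iff₀ pi_pos] at this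
          linarith
      have hshift : t * sin (t - m * π) = a * cos (t - m * π) := by
        rwa [← mul_sin_add_nat_mul_pi_eq_iff m, sub_add_cancel]
      have hmem := mem_Ioo_of_mul_sin_eq ha ht
        ⟨sub_nonneg.2 hfloor.1, by linarith [hfloor.2]⟩ hshift
      have hroot := (existsUnique_secular_root ha (by positivity : 0 ≤ (m : ℝ) * π)).unique
        (hδ m) ⟨hmem, by rwa [add_sub_cancel]⟩
      exact ⟨2 * m, by rw [rootSeq_two_mul, hroot, add_sub_cancel]⟩

lemma mul_mem_secularRoots_iff {l σ k : ℝ} (hl : 0 < l) :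
    k * l ∈ secularRoots (σ * l / 2) ↔
      0 < k ∧ (cos (k * l) = 0 ∨ 2 * k * sin (k * l) = σ * cos (k * l)) := by
  have hscale : k * l * sin (k * l) = σ * l / 2 * cos (k * l) ↔
      2 * k * sin (k * l) = σ * cos (k * l) := by
    constructor <;> intro h
    · nlinarith
    · linear_combination l / 2 * h
  simp only [secularRoots, mem_ofPred_eq, mul_pos_iff_of_pos_right hl, hscale]

end SecularEquation

/-- On the 2-star graph with two edges of length `l`, Neumann outer vertices and
δ-coupling of strength `σ` at the center, the Cesàro mean of the eigenvalue gaps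
with respect to the Kirchhoff–Neumann eigenvalues `(nπ/(2l))²` equals `σ/(2l)`. -/
theorem two_star_mean_gap (l σ : ℝ) (hl : 0 < l) (hσ : 0 < σ)
    (κ : ℕ → ℝ) (hmono : StrictMono κ)
    (hrange : Set.range κ =
      {k : ℝ | 0 < k ∧ (Real.cos (k * l) = 0 ∨
        2 * k * Real.sin (k * l) = σ * Real.cos (k * l))}) :
    Tendsto
      (fun N : ℕ => (1 / (N : ℝ)) *
        ∑ n ∈ Finset.range N, (κ n ^ 2 - ((n : ℝ) * π / (2 * l)) ^ 2))
      atTop (nhds (σ / (2 * l))) := by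
  have ha : 0 < σ * l / 2 := by positivity
  choose δ hδ using fun m : ℕ =>
    (existsUnique_secular_root ha (by positivity : 0 ≤ (m : ℝ) * π)).exists
  have hκ : κ = fun n => rootSeq δ n / l := by
    refine (hmono.range_inj ((strictMono_rootSeq fun m => (hδ m).1).div_const hl)).1 ?_
    ext k
    rw [hrange, mem_ofPred_eq, ← mul_mem_secularRoots_iff hl, ← range_rootSeq ha hδ]
    simp [div_eq_iff hl.ne']
  subst hκ
  have heven :=
    (tendsto_secular_root_sq_sub_sq (fun m => (hδ m).1) fun m => (hδ m).2).div_const (l ^ 2)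
  rw [show 2 * (σ * l / 2) / l ^ 2 = σ / l by field_simp] at heven
  rw [show σ / (2 * l) = σ / l / 2 by ring]
  refine tendsto_cesaro_of_two_mul_of_odd_eq_zero (heven.congr fun m => ?_) fun m => ?_
  · dsimp only
    rw [rootSeq_two_mul]
    push_cast
    field_simp
  · dsimp only
    rw [rootSeq_two_mul_add_one]
    ring
end

section
/- Let L > 0 and σ > 0, and for each n ∈ ℕ let k_n be the unique solution k ∈ (nπ/L, (n+1/2)π/L) of k·sin(kL) = σ·cos(kL). Then for every n ∈ ℕ one has 0 < k_n² − (nπ/L)² ≤ 2σ/L. In particular the eigenvalue gaps d_n(σ) = k_n² − (nπ/L)² are positive and uniformly bounded in n. -/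
/-!
Put `t = kₙL − nπ ∈ (0, π/2)`. Shifting by `nπ` only multiplies sine and cosine by `(−1)ⁿ`, so the
secular equation becomes `kₙ tan t = σ`, and `t < tan t` gives `kₙ t < σ`. Since
`kₙ − nπ/L = t/L`, this yields `kₙ² − (nπ/L)² < 2kₙ(kₙ − nπ/L) = 2kₙt/L < 2σ/L`.
-/

open Real

theorem mul_sin_sub_nat_mul_pi_eq {a b x : ℝ} (n : ℕ) (h : a * sin x = b * cos x) :
    a * sin (x - n * π) = b * cos (x - n * π) := by
  rw [sin_sub_nat_mul_pi, cos_sub_nat_mul_pi]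
  linear_combination (-1 : ℝ) ^ n * h

theorem mul_lt_of_mul_sin_eq_mul_cos {k σ t : ℝ} (hk : 0 < k) (ht₀ : 0 < t) (ht : t < π / 2)
    (h : k * sin t = σ * cos t) : k * t < σ := by
  have hcos : 0 < cos t := cos_pos_of_mem_Ioo ⟨by linarith, ht⟩
  have hktan : k * tan t = σ := by
    rw [tan_eq_sin_div_cos, ← mul_div_assoc, h, mul_div_cancel_right₀ _ hcos.ne']
  rw [← hktan]
  exact mul_lt_mul_of_pos_left (lt_tan ht₀ ht) hk

theorem sq_sub_sq_lt_two_mul_mul_sub {a k : ℝ} (hak : a < k) :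
    k ^ 2 - a ^ 2 < 2 * k * (k - a) := by
  nlinarith

theorem robin_neumann_gap_bounds_general (L σ : ℝ) (hL : 0 < L)
    (k : ℕ → ℝ)
    (hk : ∀ n : ℕ, k n ∈ Set.Ioo ((n : ℝ) * π / L) (((n : ℝ) + 1 / 2) * π / L) ∧
      k n * Real.sin (k n * L) = σ * Real.cos (k n * L)) :
    ∀ n : ℕ, 0 < k n ^ 2 - ((n : ℝ) * π / L) ^ 2 ∧
      k n ^ 2 - ((n : ℝ) * π / L) ^ 2 ≤ 2 * σ / L := by
  intro n
  obtain ⟨⟨hlow, hupp⟩, hsec⟩ := hk n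
  have ha : 0 ≤ (n : ℝ) * π / L := by positivity
  have hkpos : 0 < k n := ha.trans_lt hlow
  set t := k n * L - n * π
  have hgap : k n - n * π / L = t / L := by field_simp; rfl
  have ht₀ : 0 < t := by rw [div_lt_iff₀ hL] at hlow; linarith
  have ht : t < π / 2 := by rw [lt_div_iff₀ hL] at hupp; linarith
  have hkt : k n * t < σ :=
    mul_lt_of_mul_sin_eq_mul_cos hkpos ht₀ ht (mul_sin_sub_nat_mul_pi_eq n hsec)
  refine ⟨by nlinarith, (sq_sub_sq_lt_two_mul_mul_sub hlow).le.trans ?_⟩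
  rw [hgap, ← mul_div_assoc, mul_assoc]
  gcongr

/-- Uniform bounds for the single-edge Robin–Neumann gaps:
`0 < kₙ² − (nπ/L)² ≤ 2σ/L` for all `n`. -/
theorem robin_neumann_gap_bounds (L σ : ℝ) (hL : 0 < L) (hσ : 0 < σ)
    (k : ℕ → ℝ)
    (hk : ∀ n : ℕ, k n ∈ Set.Ioo ((n : ℝ) * π / L) (((n : ℝ) + 1 / 2) * π / L) ∧
      k n * Real.sin (k n * L) = σ * Real.cos (k n * L)) :
    ∀ n : ℕ, 0 < k n ^ 2 - ((n : ℝ) * π / L) ^ 2 ∧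
      k n ^ 2 - ((n : ℝ) * π / L) ^ 2 ≤ 2 * σ / L :=
  robin_neumann_gap_bounds_general L σ hL k hk
end

section
/- Let L > 0 and σ > 0, and for each n ∈ ℕ let k_n be the unique solution k ∈ (nπ/L, (n+1/2)π/L) of k·sin(kL) = σ·cos(kL). Then lim_{n→∞} ( k_n² − (nπ/L)² ) = 2σ/L. -/
/-!
Writing `k_n L = nπ + θ_n` with `θ_n ∈ (0, π/2)`, the eigenvalue equation becomes
`tan θ_n = σ / k_n`, i.e. `θ_n = arctan (σ / k_n)`. Since `k_n → ∞` and `arctan x ~ x` at `0`,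
`k_n θ_n → σ` and `θ_n → 0`. As `k_n - nπ/L = θ_n / L`, the gap is
`k_n² - (nπ/L)² = (2 k_n θ_n - θ_n² / L) / L → 2σ / L`.
-/

open Real Filter Topology Set

theorem tendsto_mul_arctan_div_atTop {α : Type*} {l : Filter α} {f : α → ℝ}
    (hf : Tendsto f l atTop) (c : ℝ) :
    Tendsto (fun a => f a * arctan (c / f a)) l (𝓝 c) := by
  have hcont : ContinuousAt (dslope arctan 0) 0 :=
    continuousAt_dslope_same.2 (differentiableAt_arctan 0)
  have hslope : Tendsto (fun a => c * dslope arctan 0 (c / f a)) l (𝓝 c) := by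
    have hlim := (hcont.tendsto.comp ((tendsto_const_nhds (x := c)).div_atTop hf)).const_mul c
    simpa [dslope_same] using hlim
  refine hslope.congr' ?_
  filter_upwards [hf.eventually_ne_atTop 0] with a ha
  -- `arctan y = y * dslope arctan 0 y` for every `y`, including `y = 0`
  have h := sub_smul_dslope arctan 0 (c / f a)
  simp only [sub_zero, arctan_zero, smul_eq_mul] at h
  rw [← h]
  field_simp

theorem eq_arctan_of_mul_sin_eq_mul_cos {k σ θ : ℝ} (n : ℤ) (hk : k ≠ 0)
    (hθ : θ ∈ Ioo (-(π / 2)) (π / 2))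
    (h : k * sin (θ + n * π) = σ * cos (θ + n * π)) :
    θ = arctan (σ / k) := by
  have hcos : cos θ ≠ 0 := (cos_pos_of_mem_Ioo hθ).ne'
  rw [sin_add_int_mul_pi, cos_add_int_mul_pi] at h
  have hsin : k * sin θ = σ * cos θ :=
    mul_left_cancel₀ (zpow_ne_zero n (by norm_num : (-1 : ℝ) ≠ 0)) (by linear_combination h)
  refine (arctan_eq_of_tan_eq ?_ hθ).symm
  rw [tan_eq_sin_div_cos, div_eq_div_iff hcos hk]
  linear_combination hsin

theorem robin_neumann_gap_limit_general (L σ : ℝ) (hL : 0 < L)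
    (k : ℕ → ℝ)
    (hk : ∀ n : ℕ, k n ∈ Set.Ioo ((n : ℝ) * π / L) (((n : ℝ) + 1 / 2) * π / L) ∧
      k n * Real.sin (k n * L) = σ * Real.cos (k n * L)) :
    Tendsto (fun n : ℕ => k n ^ 2 - ((n : ℝ) * π / L) ^ 2) atTop (nhds (2 * σ / L)) := by
  set θ : ℕ → ℝ := fun n => k n * L - n * π with hθ_def
  have hθ_mem : ∀ n, θ n ∈ Ioo (-(π / 2)) (π / 2) := fun n => by
    obtain ⟨hlo, hhi⟩ := (hk n).1
    rw [div_lt_iff₀ hL] at hlo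
    rw [lt_div_iff₀ hL] at hhi
    constructor <;> linarith [pi_pos]
  have hk_top : Tendsto k atTop atTop :=
    tendsto_atTop_mono (fun n => ((hk n).1.1).le)
      ((tendsto_natCast_atTop_atTop.atTop_mul_const pi_pos).atTop_div_const hL)
  have hk_pos : ∀ n, 0 < k n := fun n =>
    lt_of_le_of_lt (by positivity) (hk n).1.1
  have hθ_eq : ∀ n, θ n = arctan (σ / k n) := fun n => by
    refine eq_arctan_of_mul_sin_eq_mul_cos n (hk_pos n).ne' (hθ_mem n) ?_
    simpa only [hθ_def, Int.cast_natCast, sub_add_cancel] using (hk n).2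
  have hkθ : Tendsto (fun n => k n * θ n) atTop (𝓝 σ) := by
    simpa only [hθ_eq] using tendsto_mul_arctan_div_atTop hk_top σ
  have hθ : Tendsto θ atTop (𝓝 0) := by
    rw [funext hθ_eq, ← arctan_zero]
    exact (continuous_arctan.tendsto 0).comp ((tendsto_const_nhds (x := σ)).div_atTop hk_top)
  have hgap : ∀ n : ℕ, k n ^ 2 - ((n : ℝ) * π / L) ^ 2 = (2 * (k n * θ n) - θ n ^ 2 / L) / L :=
    fun n => by
      simp only [hθ_def]
      field_simp
      ring
  simpa only [hgap, zero_pow two_ne_zero, zero_div, sub_zero] using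
    ((hkθ.const_mul 2).sub ((hθ.pow 2).div_const L)).div_const L

/-- The single-edge Robin–Neumann eigenvalue gaps converge: `kₙ² − (nπ/L)² → 2σ/L`. -/
theorem robin_neumann_gap_limit (L σ : ℝ) (hL : 0 < L) (hσ : 0 < σ)
    (k : ℕ → ℝ)
    (hk : ∀ n : ℕ, k n ∈ Set.Ioo ((n : ℝ) * π / L) (((n : ℝ) + 1 / 2) * π / L) ∧
      k n * Real.sin (k n * L) = σ * Real.cos (k n * L)) :
    Tendsto (fun n : ℕ => k n ^ 2 - ((n : ℝ) * π / L) ^ 2) atTop (nhds (2 * σ / L)) :=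
  robin_neumann_gap_limit_general L σ hL k hk
end

section
/- Let L > 0 and n ∈ ℕ, and let K : (0,∞) → ℝ be a function such that for every σ > 0, K(σ) ∈ (nπ/L, (n+1/2)π/L) and K(σ)·sin(K(σ)·L) = σ·cos(K(σ)·L). Then K is differentiable on (0,∞) and for every σ > 0 the map σ ↦ K(σ)² has derivative cos²(K(σ)L) / ( L/2 + sin(2·K(σ)·L)/(4·K(σ)) ). -/
/-!
On the window `(nπ/L, (n+1/2)π/L)` the secular function `F(k) = k tan(kL)` is positive with
derivative `tan(kL) + kL/cos²(kL) > 0`, so it is strictly increasing and `K` is its inverse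
on `(0, ∞)`. An inverse of a strictly monotone function is monotone with an open image, hence
continuous, and the inverse function theorem gives `K' = 1/F'(K)`. The formula is then the
identity `2k/F'(k) = cos²(kL) / (L/2 + sin(2kL)/(4k))`, both sides being
`2k cos²(kL) / (kL + sin(kL) cos(kL))`.
-/

open Real Set Filter Topology

theorem StrictMonoOn.continuousAt_of_leftInvOn {F K : ℝ → ℝ} {s t : Set ℝ} {y : ℝ}
    (hF : StrictMonoOn F s) (hs : IsOpen s) (ht : t ∈ 𝓝 y) (hFs : MapsTo F s t)
    (hKt : MapsTo K t s) (hFK : LeftInvOn F K t) : ContinuousAt K y := by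
  have hmono : MonotoneOn K t := fun a ha b hb hab =>
    (hF.le_iff_le (hKt ha) (hKt hb)).1 (by rwa [hFK ha, hFK hb])
  have himage : s ⊆ K '' t := fun k hk =>
    ⟨F k, hFs hk, hF.injOn (hKt (hFs hk)) hk (hFK (hFs hk))⟩
  exact continuousAt_of_monotoneOn_of_image_mem_nhds hmono ht
    (mem_of_superset (hs.mem_nhds (hKt (mem_of_mem_nhds ht))) himage)

theorem StrictMonoOn.hasDerivAt_of_leftInvOn {F K : ℝ → ℝ} {s t : Set ℝ} {y F' : ℝ}
    (hF : StrictMonoOn F s) (hs : IsOpen s) (ht : t ∈ 𝓝 y) (hFs : MapsTo F s t)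
    (hKt : MapsTo K t s) (hFK : LeftInvOn F K t) (hF' : HasDerivAt F F' (K y))
    (hF'0 : F' ≠ 0) : HasDerivAt K F'⁻¹ y :=
  hF'.of_local_left_inverse (hF.continuousAt_of_leftInvOn hs ht hFs hKt hFK) hF'0
    (eventually_of_mem ht fun _ hz => hFK hz)

theorem tan_pos_of_mem_Ioo_nat_mul_pi {n : ℕ} {x : ℝ} (hx : x ∈ Ioo (n * π) (n * π + π / 2)) :
    0 < tan x := by
  have h := tan_pos_of_pos_of_lt_pi_div_two (x := x - n * π) (by linarith [hx.1])
    (by linarith [hx.2])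
  rwa [tan_periodic.sub_nat_mul_eq] at h

theorem cos_ne_zero_of_tan_pos {x : ℝ} (hx : 0 < tan x) : cos x ≠ 0 := by
  intro h
  simp [tan_eq_sin_div_cos, h] at hx

noncomputable def robinSecular (L k : ℝ) : ℝ := k * tan (k * L)

theorem hasDerivAt_robinSecular {L k : ℝ} (hk : cos (k * L) ≠ 0) :
    HasDerivAt (robinSecular L) (tan (k * L) + k * L / cos (k * L) ^ 2) k := by
  have htan : HasDerivAt (fun k => tan (k * L)) (1 / cos (k * L) ^ 2 * L) k :=
    HasDerivAt.comp k (hasDerivAt_tan hk) (hasDerivAt_mul_const L)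
  exact ((hasDerivAt_id' k).mul htan).congr_deriv (by field_simp)

section Window

variable {L k : ℝ} {n : ℕ}

theorem pos_of_mem_window (hL : 0 < L) (hk : k ∈ Ioo (n * π / L) ((n + 1 / 2) * π / L)) :
    0 < k :=
  lt_of_le_of_lt (by positivity) hk.1

theorem tan_mul_pos_of_mem_window (hL : 0 < L)
    (hk : k ∈ Ioo (n * π / L) ((n + 1 / 2) * π / L)) : 0 < tan (k * L) := by
  apply tan_pos_of_mem_Ioo_nat_mul_pi
  constructor
  · exact (div_lt_iff₀ hL).1 hk.1
  · linarith [(lt_div_iff₀ hL).1 hk.2]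

theorem cos_mul_ne_zero_of_mem_window (hL : 0 < L)
    (hk : k ∈ Ioo (n * π / L) ((n + 1 / 2) * π / L)) : cos (k * L) ≠ 0 :=
  cos_ne_zero_of_tan_pos (tan_mul_pos_of_mem_window hL hk)

theorem robinSecular_pos (hL : 0 < L) (hk : k ∈ Ioo (n * π / L) ((n + 1 / 2) * π / L)) :
    0 < robinSecular L k :=
  mul_pos (pos_of_mem_window hL hk) (tan_mul_pos_of_mem_window hL hk)

end Window

theorem strictMonoOn_robinSecular {L : ℝ} (hL : 0 < L) (n : ℕ) :
    StrictMonoOn (robinSecular L) (Ioo (n * π / L) ((n + 1 / 2) * π / L)) := by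
  refine strictMonoOn_of_hasDerivWithinAt_pos (convex_Ioo _ _)
    (fun k hk => (hasDerivAt_robinSecular
      (cos_mul_ne_zero_of_mem_window hL hk)).continuousAt.continuousWithinAt)
    (fun k hk => (hasDerivAt_robinSecular
      (cos_mul_ne_zero_of_mem_window hL (interior_subset hk))).hasDerivWithinAt)
    (fun k hk => ?_)
  rw [interior_Ioo] at hk
  have := pos_of_mem_window hL hk
  have := tan_mul_pos_of_mem_window hL hk
  positivity

theorem two_mul_div_deriv_robinSecular {L k : ℝ} (hk : k ≠ 0) (hc : cos (k * L) ≠ 0) :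
    2 * k * (tan (k * L) + k * L / cos (k * L) ^ 2)⁻¹
      = cos (k * L) ^ 2 / (L / 2 + sin (2 * k * L) / (4 * k)) := by
  have hden : tan (k * L) + k * L / cos (k * L) ^ 2
      = (k * L + sin (k * L) * cos (k * L)) / cos (k * L) ^ 2 := by
    rw [tan_eq_sin_div_cos]
    field_simp
    ring
  have hden' : L / 2 + sin (2 * k * L) / (4 * k)
      = (k * L + sin (k * L) * cos (k * L)) / (2 * k) := by
    rw [mul_assoc, sin_two_mul]
    field_simp
    ring
  rw [hden, hden', inv_div, div_div_eq_mul_div]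
  ring

/-- Hadamard/Feynman–Hellmann formula for the single-edge Robin eigenvalue
branch: the branch `σ ↦ K(σ)` is differentiable on `(0,∞)` and
`d(K(σ)²)/dσ = cos²(K(σ)L) / (L/2 + sin(2K(σ)L)/(4K(σ)))`. -/
theorem robin_branch_derivative (L : ℝ) (hL : 0 < L) (n : ℕ) (K : ℝ → ℝ)
    (hK : ∀ σ : ℝ, 0 < σ →
      K σ ∈ Set.Ioo ((n : ℝ) * π / L) (((n : ℝ) + 1 / 2) * π / L) ∧
      K σ * Real.sin (K σ * L) = σ * Real.cos (K σ * L)) :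
    ∀ σ : ℝ, 0 < σ → DifferentiableAt ℝ K σ ∧
      HasDerivAt (fun s => K s ^ 2)
        (Real.cos (K σ * L) ^ 2 / (L / 2 + Real.sin (2 * K σ * L) / (4 * K σ))) σ := by
  have hKW : MapsTo K (Ioi 0) (Ioo (n * π / L) ((n + 1 / 2) * π / L)) := fun σ hσ => (hK σ hσ).1
  have hFK : LeftInvOn (robinSecular L) K (Ioi 0) := fun σ hσ => by
    rw [robinSecular, tan_eq_sin_div_cos, ← mul_div_assoc, (hK σ hσ).2,
      mul_div_cancel_right₀ _ (cos_mul_ne_zero_of_mem_window hL (hKW hσ))]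
  intro σ hσ
  have hk := pos_of_mem_window hL (hKW hσ)
  have htan := tan_mul_pos_of_mem_window hL (hKW hσ)
  have hcos := cos_mul_ne_zero_of_mem_window hL (hKW hσ)
  have hKd := (strictMonoOn_robinSecular hL n).hasDerivAt_of_leftInvOn isOpen_Ioo
    (Ioi_mem_nhds hσ) (fun _ hk' => robinSecular_pos hL hk') hKW hFK
    (hasDerivAt_robinSecular hcos) (by positivity)
  refine ⟨hKd.differentiableAt, ?_⟩
  rw [← two_mul_div_deriv_robinSecular hk.ne' hcos]
  exact (hKd.fun_pow 2).congr_deriv (by ring)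
end

section
/- Let l > 0 and σ > 0. (i) For every n ∈ ℕ there exists a unique s ∈ (nπ/l, (n+1/2)π/l) with 2s·sin(sl) = σ·cos(sl). (ii) Moreover, every k > 0 satisfying cos(kl) = 0 or 2k·sin(kl) = σ·cos(kl) is either of the form (2m+1)π/(2l) for some m ∈ ℕ, or lies in (nπ/l, (n+1/2)π/l) for some n ∈ ℕ and satisfies 2k·sin(kl) = σ·cos(kl). Hence K_σ := {k > 0 : cos(kl) = 0 or 2k·sin(kl) = σ·cos(kl)} = {s_n : n ∈ ℕ} ∪ {(2m+1)π/(2l) : m ∈ ℕ}, where s_n denotes the unique solution from (i). -/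
/-!
Put `x = k l`. Away from the zeros of `cos x` (the antisymmetric modes), the secular equation
reads `x tan x = σ l / 2`. Since `σ l / 2 > 0` this forces `tan x > 0`, so a positive root lies in
a window `(nπ, nπ + π/2)`; on each such window `x ↦ x tan x` increases strictly from `0` to `+∞`,
hence takes the value `σ l / 2` exactly once.
-/

open Real Set Filter Topology

namespace TwoStar

lemma cos_ne_zero_of_mem_Ico {n : ℕ} {x : ℝ} (hx : x ∈ Ico (n * π) (n * π + π / 2)) :
    cos x ≠ 0 := by
  have hpos : 0 < cos (x - n * π) :=
    cos_pos_of_mem_Ioo ⟨by linarith [hx.1, pi_pos], by linarith [hx.2]⟩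
  rw [cos_antiperiodic.sub_nat_mul_eq] at hpos
  exact right_ne_zero_of_mul hpos.ne'

lemma tan_pos_of_mem_Ioo {n : ℕ} {x : ℝ} (hx : x ∈ Ioo (n * π) (n * π + π / 2)) :
    0 < tan x := by
  rw [← tan_sub_nat_mul_pi x n]
  exact tan_pos_of_pos_of_lt_pi_div_two (by linarith [hx.1]) (by linarith [hx.2])

lemma strictMonoOn_mul_tan (n : ℕ) :
    StrictMonoOn (fun x => x * tan x) (Ioo (n * π) (n * π + π / 2)) := by
  intro x hx y hy hxy
  have htan : tan x < tan y := by
    rw [← tan_sub_nat_mul_pi x n, ← tan_sub_nat_mul_pi y n]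
    exact tan_lt_tan_of_lt_of_lt_pi_div_two (by linarith [hx.1, pi_pos]) (by linarith [hy.2])
      (by linarith)
  have hx0 : 0 < x := lt_of_le_of_lt (by positivity) hx.1
  exact mul_lt_mul'' hxy htan hx0.le (tan_pos_of_mem_Ioo hx).le

lemma tendsto_mul_tan_atTop (n : ℕ) :
    Tendsto (fun x => x * tan x) (𝓝[<] (n * π + π / 2)) atTop := by
  have hshift : Tendsto (fun x => x - n * π) (𝓝[<] (n * π + π / 2)) (𝓝[<] (π / 2)) := by
    refine tendsto_nhdsWithin_of_tendsto_nhds_of_eventually_within _ ?_ ?_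
    · simpa using ((continuous_sub_right ((n : ℝ) * π)).tendsto (n * π + π / 2)).mono_left
        nhdsWithin_le_nhds
    · filter_upwards [self_mem_nhdsWithin] with x hx
      exact show x - n * π < π / 2 by linarith [mem_Iio.mp hx]
  have htan : Tendsto tan (𝓝[<] (n * π + π / 2)) atTop := by
    simpa [Function.comp_def, tan_sub_nat_mul_pi] using tendsto_tan_pi_div_two.comp hshift
  exact (tendsto_nhdsWithin_of_tendsto_nhds tendsto_id).pos_mul_atTop (by positivity) htan

lemma exists_mem_Ioo_mul_tan_eq {c : ℝ} (hc : 0 < c) (n : ℕ) :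
    ∃ x ∈ Ioo (n * π) (n * π + π / 2), x * tan x = c := by
  obtain ⟨b, hcb, hb⟩ := (((tendsto_mul_tan_atTop n).eventually_gt_atTop c).and
    (Ioo_mem_nhdsLT (show (n : ℝ) * π < n * π + π / 2 by linarith [pi_pos]))).exists
  have hcont : ContinuousOn (fun x => x * tan x) (Icc (n * π) b) :=
    continuousOn_id.mul <| continuousOn_tan.mono fun x hx =>
      cos_ne_zero_of_mem_Ico ⟨hx.1, hx.2.trans_lt hb.2⟩
  have hc0 : c ∈ Ioo ((n * π) * tan (n * π)) (b * tan b) := by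
    rw [tan_nat_mul_pi, mul_zero]
    exact ⟨hc, hcb⟩
  obtain ⟨x, hx, hxc⟩ := intermediate_value_Ioo hb.1.le hcont hc0
  exact ⟨x, ⟨hx.1, hx.2.trans hb.2⟩, hxc⟩

lemma existsUnique_mem_Ioo_mul_tan_eq {c : ℝ} (hc : 0 < c) (n : ℕ) :
    ∃! x, x ∈ Ioo (n * π) (n * π + π / 2) ∧ x * tan x = c := by
  obtain ⟨x, hx, hxc⟩ := exists_mem_Ioo_mul_tan_eq hc n
  exact ⟨x, ⟨hx, hxc⟩, fun y ⟨hy, hyc⟩ => (strictMonoOn_mul_tan n).injOn hy hx (hyc.trans hxc.symm)⟩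

lemma exists_nat_mem_Ioo_of_tan_pos {x : ℝ} (hx : 0 < x) (htan : 0 < tan x) :
    ∃ n : ℕ, x ∈ Ioo (n * π) (n * π + π / 2) := by
  set n := ⌊x / π⌋₊
  have hn : n * π ≤ x := (le_div_iff₀ pi_pos).1 (Nat.floor_le (by positivity))
  have hnπ : x < n * π + π := by
    have := (div_lt_iff₀ pi_pos).1 (Nat.lt_floor_add_one (x / π))
    linarith
  set y := x - n * π
  have hty : 0 < tan y := by rwa [tan_sub_nat_mul_pi]
  have hy0 : 0 < y := by
    refine lt_of_le_of_ne (by linarith) fun hy => ?_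
    rw [← hy, tan_zero] at hty
    exact lt_irrefl 0 hty
  have hsin : 0 < sin y := sin_pos_of_pos_of_lt_pi hy0 (by linarith)
  have hcos : 0 < cos y := (div_pos_iff_of_pos_left hsin).1 (by rwa [← tan_eq_sin_div_cos])
  have hyπ : y < π / 2 := by
    by_contra! h
    linarith [cos_nonpos_of_pi_div_two_le_of_le h (by linarith)]
  exact ⟨n, by linarith, by linarith⟩

lemma exists_nat_eq_of_cos_eq_zero {x : ℝ} (hx : 0 < x) (hcos : cos x = 0) :
    ∃ m : ℕ, x = (2 * m + 1) * π / 2 := by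
  obtain ⟨k, rfl⟩ := cos_eq_zero_iff.1 hcos
  have hk : (0 : ℤ) ≤ k := by
    have : (0 : ℝ) < 2 * k + 1 := by
      by_contra! h
      linarith [mul_nonpos_of_nonpos_of_nonneg h pi_pos.le]
    exact_mod_cast (show (-1 : ℝ) < k by linarith)
  lift k to ℕ using hk
  exact ⟨k, by push_cast; ring⟩

variable {l σ : ℝ}

/-- `s` is the root `s_n` of the symmetric-mode equation in the `n`-th window. -/
def IsSymmetricMode (l σ : ℝ) (n : ℕ) (s : ℝ) : Prop :=
  s ∈ Ioo ((n : ℝ) * π / l) (((n : ℝ) + 1 / 2) * π / l) ∧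
    2 * s * sin (s * l) = σ * cos (s * l)

lemma secular_eq_iff_mul_tan_eq (hl : 0 < l) {k : ℝ} (hcos : cos (k * l) ≠ 0) :
    2 * k * sin (k * l) = σ * cos (k * l) ↔ k * l * tan (k * l) = σ * l / 2 := by
  rw [tan_eq_sin_div_cos, ← mul_div_assoc, div_eq_iff hcos]
  constructor <;> intro h
  · linear_combination l / 2 * h
  · exact mul_right_cancel₀ hl.ne' (by linear_combination 2 * h)

lemma isSymmetricMode_iff (hl : 0 < l) {n : ℕ} {s : ℝ} :
    IsSymmetricMode l σ n s ↔
      s * l ∈ Ioo (n * π) (n * π + π / 2) ∧ s * l * tan (s * l) = σ * l / 2 := by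
  have hwin : s ∈ Ioo ((n : ℝ) * π / l) (((n : ℝ) + 1 / 2) * π / l) ↔
      s * l ∈ Ioo (n * π) (n * π + π / 2) := by
    rw [mem_Ioo, mem_Ioo, div_lt_iff₀ hl, lt_div_iff₀ hl, add_mul, one_div_mul_eq_div]
  rw [IsSymmetricMode, hwin]
  exact and_congr_right fun h =>
    secular_eq_iff_mul_tan_eq hl (cos_ne_zero_of_mem_Ico (Ioo_subset_Ico_self h))

lemma IsSymmetricMode.pos (hl : 0 < l) {n : ℕ} {s : ℝ} (h : IsSymmetricMode l σ n s) : 0 < s :=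
  lt_of_le_of_lt (by positivity) h.1.1

lemma existsUnique_isSymmetricMode (hl : 0 < l) (hσ : 0 < σ) (n : ℕ) :
    ∃! s, IsSymmetricMode l σ n s :=
  (Equiv.existsUnique_congr (Equiv.mulRight₀ l hl.ne') fun _ => isSymmetricMode_iff hl).2
    (existsUnique_mem_Ioo_mul_tan_eq (by positivity) n)

lemma cos_antisymmetric_mode (hl : 0 < l) (m : ℕ) :
    cos ((2 * (m : ℝ) + 1) * π / (2 * l) * l) = 0 := by
  rw [cos_eq_zero_iff]
  exact ⟨m, by field_simp; push_cast; ring⟩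

lemma antisymmetric_or_symmetric_of_secular (hl : 0 < l) (hσ : 0 < σ) {k : ℝ} (hk : 0 < k)
    (h : cos (k * l) = 0 ∨ 2 * k * sin (k * l) = σ * cos (k * l)) :
    (∃ m : ℕ, k = (2 * (m : ℝ) + 1) * π / (2 * l)) ∨ ∃ n : ℕ, IsSymmetricMode l σ n k := by
  have hkl : 0 < k * l := mul_pos hk hl
  by_cases hcos : cos (k * l) = 0
  · obtain ⟨m, hm⟩ := exists_nat_eq_of_cos_eq_zero hkl hcos
    exact Or.inl ⟨m, by rw [eq_div_iff (by positivity)]; linear_combination 2 * hm⟩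
  · have htan := (secular_eq_iff_mul_tan_eq hl hcos).1 (h.resolve_left hcos)
    obtain ⟨n, hn⟩ := exists_nat_mem_Ioo_of_tan_pos hkl
      (pos_of_mul_pos_right (htan ▸ by positivity) hkl.le)
    exact Or.inr ⟨n, (isSymmetricMode_iff hl).2 ⟨hn, htan⟩⟩

end TwoStar

open TwoStar in
/-- Structure of the secular set of the δ-coupled 2-star: (i) in each window
`(nπ/l, (n+1/2)π/l)` there is a unique symmetric-mode root of
`2s sin(sl) = σ cos(sl)`; (ii) every element of
`K_σ = {k > 0 : cos(kl) = 0 ∨ 2k sin(kl) = σ cos(kl)}` is either an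
antisymmetric mode `(2m+1)π/(2l)` or such a symmetric-mode root; hence `K_σ`
equals the union of these two families. -/
theorem two_star_secular_structure (l σ : ℝ) (hl : 0 < l) (hσ : 0 < σ) :
    (∀ n : ℕ, ∃! s : ℝ, s ∈ Set.Ioo ((n : ℝ) * π / l) (((n : ℝ) + 1 / 2) * π / l) ∧
      2 * s * Real.sin (s * l) = σ * Real.cos (s * l)) ∧
    (∀ k : ℝ, 0 < k →
      (Real.cos (k * l) = 0 ∨ 2 * k * Real.sin (k * l) = σ * Real.cos (k * l)) →
      (∃ m : ℕ, k = (2 * (m : ℝ) + 1) * π / (2 * l)) ∨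
      (∃ n : ℕ, k ∈ Set.Ioo ((n : ℝ) * π / l) (((n : ℝ) + 1 / 2) * π / l) ∧
        2 * k * Real.sin (k * l) = σ * Real.cos (k * l))) ∧
    (∀ s : ℕ → ℝ,
      (∀ n : ℕ, s n ∈ Set.Ioo ((n : ℝ) * π / l) (((n : ℝ) + 1 / 2) * π / l) ∧
        2 * s n * Real.sin (s n * l) = σ * Real.cos (s n * l)) →
      {k : ℝ | 0 < k ∧ (Real.cos (k * l) = 0 ∨
          2 * k * Real.sin (k * l) = σ * Real.cos (k * l))}
        = Set.range s ∪ {k : ℝ | ∃ m : ℕ, k = (2 * (m : ℝ) + 1) * π / (2 * l)}) := by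
  refine ⟨existsUnique_isSymmetricMode hl hσ,
    fun k hk h => antisymmetric_or_symmetric_of_secular hl hσ hk h, fun s hs => ?_⟩
  ext k
  constructor
  · rintro ⟨hk, h⟩
    rcases antisymmetric_or_symmetric_of_secular hl hσ hk h with hm | ⟨n, hn⟩
    · exact Or.inr hm
    · exact Or.inl ⟨n, (existsUnique_isSymmetricMode hl hσ n).unique (hs n) hn⟩
  · rintro (⟨n, rfl⟩ | ⟨m, rfl⟩)
    · exact ⟨IsSymmetricMode.pos hl (hs n), Or.inr (hs n).2⟩
    · exact ⟨by positivity, Or.inl (cos_antisymmetric_mode hl m)⟩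
end
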